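/- Assume B>0, t∈ℕ and k ≥ ⌊ηn⌋ + t. Then, whenever the event Count(B,t) holds, sup_{v∈S^{d-1}} |ê_k(v) − ⟨v,Σv⟩| ≤ ε(B) + 2Bk/n + κ_p^p‖Σ‖^{p/2}/B^{p/2−1}. -/

import Mathlib

open MeasureTheory ProbabilityTheory Real
open scoped RealInnerProductSpace ENNReal NNReal

namespace CovPaper

variable {d n : ℕ}

instance {d : ℕ} : MeasurableSpace (Matrix (Fin d) (Fin d) ℝ) :=
  inferInstanceAs (MeasurableSpace (Fin d → Fin d → ℝ))

/-- Operator norm of a real `d × d` matrix, viewed as an operator on Euclidean space. -/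
noncomputable def opNorm (A : Matrix (Fin d) (Fin d) ℝ) : ℝ :=
  ‖Matrix.toEuclideanCLM (𝕜 := ℝ) A‖

/-- Quadratic form `⟨v, A v⟩`. -/
noncomputable def quadForm (A : Matrix (Fin d) (Fin d) ℝ)
    (v : EuclideanSpace ℝ (Fin d)) : ℝ :=
  ⟪v, Matrix.toEuclideanCLM (𝕜 := ℝ) A v⟫

/-- Effective rank `tr(A)/‖A‖`. -/
noncomputable def effRank (A : Matrix (Fin d) (Fin d) ℝ) : ℝ :=
  A.trace / opNorm A

open Classical in
/-- The number of indices `i` satisfying `P i`. -/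
noncomputable def nCount (P : Fin n → Prop) : ℕ :=
  (Finset.univ.filter P).card

/-- Trimmed mean with trimming parameter `k`: the infimum, over all subsets `S` of
`[n]` of cardinality `n - k`, of the average of `W` over `S`. -/
noncomputable def trimmedMean (k : ℕ) (W : Fin n → ℝ) : ℝ :=
  ⨅ S : {S : Finset (Fin n) // S.card = n - k}, (∑ i ∈ S.1, W i) / ((n - k : ℕ) : ℝ)

/-- Gaussian measure `Γ_{v,γ}` on Euclidean space, with mean `v` and covariance `γ² I`. -/
noncomputable def gaussianE (v : EuclideanSpace ℝ (Fin d)) (γ : ℝ) :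
    Measure (EuclideanSpace ℝ (Fin d)) :=
  (Measure.pi fun i : Fin d => gaussianReal (v i) (γ ^ 2).toNNReal).map
    (MeasurableEquiv.toLp 2 (Fin d → ℝ))

/-- The numerical constant `c = ∑_{j≥1} e^{-j/2}·6(j+1)²/j^{3/2} + 4`. -/
noncomputable def cSeries : ℝ :=
  (∑' j : ℕ, Real.exp (-((j : ℝ) + 1) / 2) *
    (6 * ((j : ℝ) + 2) ^ 2 / ((j : ℝ) + 1) ^ ((3 : ℝ) / 2))) + 4

variable {Ω : Type} [MeasureSpace Ω]

/-- The `L^p`–`L^2` moment constant `κ_p`. -/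
noncomputable def kappa (X : Ω → EuclideanSpace ℝ (Fin d))
    (S : Matrix (Fin d) (Fin d) ℝ) (p : ℝ) : ℝ :=
  sSup {r : ℝ | ∃ v : EuclideanSpace ℝ (Fin d), quadForm S v = 1 ∧
    r = (∫ ω, |⟪X ω, v⟫| ^ p) ^ (1 / p)}

/-- `S` is the covariance matrix of the (centered) random vector `X`. -/
def IsCovMatrix (X : Ω → EuclideanSpace ℝ (Fin d))
    (S : Matrix (Fin d) (Fin d) ℝ) : Prop :=
  ∀ i j, S i j = ∫ ω, X ω i * X ω j

/-- `X` is an i.i.d. sample of copies of `X₀`. -/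
def IsIIDSample (X : Fin n → Ω → EuclideanSpace ℝ (Fin d))
    (X₀ : Ω → EuclideanSpace ℝ (Fin d)) : Prop :=
  iIndepFun X ℙ ∧ ∀ i, IdentDistrib (X i) X₀ ℙ ℙ

/-- The trimmed quadratic-form estimator `ê_k(v)` computed from data `Y`. -/
noncomputable def eHat (Y : Fin n → EuclideanSpace ℝ (Fin d)) (k : ℕ)
    (v : EuclideanSpace ℝ (Fin d)) : ℝ :=
  trimmedMean k fun i => ⟪Y i, v⟫ ^ 2


/-!
Fix a unit vector `v`. On `Count(B, t)` at most `⌊ηn⌋ + t ≤ k` indices are contaminated or have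
`⟨X_i, v⟩² > B`; on all other indices `⟨Y_i, v⟩² = ⟨X_i, v⟩² ∧ B`. Hence any `n - k` of the
`⟨Y_i, v⟩²` contain at least `n - 2k` of the truncated values, which lie in `[0, B]`, and trimming
moves the mean of the truncated values by at most `2Bk/n`. That mean is `ε(B)`-close to
`E[⟨X, v⟩² ∧ B]`, and the truncation bias is controlled pointwise by
`x² - x² ∧ B ≤ |x|^p / B^{p/2-1}`, with `E|⟨X, v⟩|^p ≤ κ_p^p ⟨v, Σv⟩^{p/2}`.
-/

section TrimmedMean

variable {k : ℕ}

lemma trimmedMean_le_of_card_eq {W : Fin n → ℝ} (hW : 0 ≤ W) {S : Finset (Fin n)}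
    (hS : S.card = n - k) : trimmedMean k W ≤ (∑ i ∈ S, W i) / ((n - k : ℕ) : ℝ) := by
  refine ciInf_le ⟨0, ?_⟩ (⟨S, hS⟩ : {S : Finset (Fin n) // S.card = n - k})
  rintro _ ⟨T, rfl⟩
  exact div_nonneg (Finset.sum_nonneg fun i _ => hW i) (Nat.cast_nonneg _)

lemma le_trimmedMean {W : Fin n → ℝ} {a : ℝ}
    (h : ∀ S : Finset (Fin n), S.card = n - k → a ≤ (∑ i ∈ S, W i) / ((n - k : ℕ) : ℝ)) :
    a ≤ trimmedMean k W := by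
  obtain ⟨S, -, hS⟩ :=
    Finset.exists_subset_card_eq (s := (Finset.univ : Finset (Fin n))) (n := n - k) (by simp)
  have : Nonempty {S : Finset (Fin n) // S.card = n - k} := ⟨⟨S, hS⟩⟩
  exact le_ciInf fun S => h S.1 S.2

lemma sum_le_card_mul {ι : Type*} (s : Finset ι) {f : ι → ℝ} {B : ℝ} (hf : ∀ i, f i ≤ B) :
    ∑ i ∈ s, f i ≤ s.card * B := by
  simpa [nsmul_eq_mul] using Finset.sum_le_card_nsmul s f B fun i _ => hf i

variable {W Z : Fin n → ℝ} {B : ℝ} {G : Finset (Fin n)}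

lemma trimmedMean_le_mean_add (hkn : k < n) (hW : 0 ≤ W) (hZ : 0 ≤ Z) (hZB : ∀ i, Z i ≤ B)
    (hWZ : ∀ i ∈ G, W i = Z i) (hG : Gᶜ.card ≤ k) :
    trimmedMean k W ≤ (∑ i, Z i) / n + B * k / n := by
  have hGcard : n - k ≤ G.card := by
    have := Finset.card_compl G; simp only [Fintype.card_fin] at this; omega
  obtain ⟨S, hSG, hS⟩ := Finset.exists_subset_card_eq hGcard
  have hWS : ∑ i ∈ S, W i = ∑ i ∈ S, Z i := Finset.sum_congr rfl fun i hi => hWZ i (hSG hi)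
  have hsub : ∑ i ∈ S, Z i ≤ ∑ i, Z i :=
    Finset.sum_le_sum_of_subset_of_nonneg (Finset.subset_univ S) fun i _ _ => hZ i
  have hSB : ∑ i ∈ S, Z i ≤ (n - k : ℕ) * B := hS ▸ sum_le_card_mul S hZB
  have hn : (0 : ℝ) < n := by exact_mod_cast (Nat.zero_le k).trans_lt hkn
  have hm : (0 : ℝ) < (n - k : ℕ) := by exact_mod_cast Nat.sub_pos_of_lt hkn
  have hmk : ((n - k : ℕ) : ℝ) + k = n := by rw [Nat.cast_sub hkn.le]; ring
  calc trimmedMean k W ≤ (∑ i ∈ S, Z i) / (n - k : ℕ) := hWS ▸ trimmedMean_le_of_card_eq hW hS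
    _ = (∑ i ∈ S, Z i) / n + (∑ i ∈ S, Z i) / (n - k : ℕ) * k / n := by
        field_simp
        rw [← hmk]
    _ ≤ (∑ i, Z i) / n + B * k / n := by
        gcongr
        rwa [div_le_iff₀ hm, mul_comm]

lemma mean_sub_le_trimmedMean (hkn : k < n) (hB : 0 ≤ B) (hW : 0 ≤ W) (hZB : ∀ i, Z i ≤ B)
    (hWZ : ∀ i ∈ G, W i = Z i) (hG : Gᶜ.card ≤ k) :
    (∑ i, Z i) / n - 2 * B * k / n ≤ trimmedMean k W := by
  refine le_trimmedMean fun S hS => ?_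
  have hSc : Sᶜ.card = k := by
    have := Finset.card_compl S; simp only [Fintype.card_fin] at this; omega
  have hbad : ((S ∩ G)ᶜ.card : ℝ) ≤ 2 * k := by
    rw [Finset.compl_inter]
    exact_mod_cast (Finset.card_union_le _ _).trans (by omega)
  have hBk : ∑ i ∈ (S ∩ G)ᶜ, Z i ≤ 2 * B * k :=
    calc ∑ i ∈ (S ∩ G)ᶜ, Z i ≤ (S ∩ G)ᶜ.card * B := sum_le_card_mul _ hZB
      _ ≤ 2 * k * B := by gcongr
      _ = 2 * B * k := by ring
  have hgood : ∑ i, Z i - 2 * B * k ≤ ∑ i ∈ S, W i :=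
    calc ∑ i, Z i - 2 * B * k ≤ ∑ i, Z i - ∑ i ∈ (S ∩ G)ᶜ, Z i := by linarith
      _ = ∑ i ∈ S ∩ G, W i := by
          rw [← Finset.sum_add_sum_compl (S ∩ G) Z, add_sub_cancel_right]
          exact (Finset.sum_congr rfl fun i hi => hWZ i (Finset.mem_inter.1 hi).2).symm
      _ ≤ ∑ i ∈ S, W i :=
          Finset.sum_le_sum_of_subset_of_nonneg Finset.inter_subset_left fun i _ _ => hW i
  have hm : (0 : ℝ) < (n - k : ℕ) := by exact_mod_cast Nat.sub_pos_of_lt hkn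
  calc (∑ i, Z i) / n - 2 * B * k / n = (∑ i, Z i - 2 * B * k) / n := by ring
    _ ≤ (∑ i ∈ S, W i) / n := by gcongr
    _ ≤ (∑ i ∈ S, W i) / (n - k : ℕ) :=
        div_le_div_of_nonneg_left (Finset.sum_nonneg fun i _ => hW i) hm
          (by exact_mod_cast Nat.sub_le n k)

theorem abs_trimmedMean_sub_mean_le (hkn : k < n) (hW : 0 ≤ W) (hZ : 0 ≤ Z)
    (hZB : ∀ i, Z i ≤ B) (hWZ : ∀ i ∈ G, W i = Z i) (hG : Gᶜ.card ≤ k) :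
    |trimmedMean k W - (∑ i, Z i) / n| ≤ 2 * B * k / n := by
  have hB : 0 ≤ B := (hZ ⟨0, (Nat.zero_le k).trans_lt hkn⟩).trans (hZB _)
  have hBk : B * k / n ≤ 2 * B * k / n := by gcongr; linarith
  have hup := trimmedMean_le_mean_add hkn hW hZ hZB hWZ hG
  have hlow := mean_sub_le_trimmedMean hkn hB hW hZB hWZ hG
  rw [abs_le]
  constructor <;> linarith

end TrimmedMean

section Moments

variable {α : Type*} [MeasurableSpace α] {μ : Measure α} [IsFiniteMeasure μ] {p : ℝ}

lemma _root_.MeasureTheory.MemLp.integrable_norm_rpow_ofReal {β : Type*} [NormedAddCommGroup β]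
    {f : α → β} (hf : MemLp f (ENNReal.ofReal p) μ) (hp : 0 ≤ p) :
    Integrable (fun a => ‖f a‖ ^ p) μ := by
  simpa [ENNReal.toReal_ofReal hp] using hf.integrable_norm_rpow'

lemma _root_.MeasureTheory.MemLp.memLp_two {β : Type*} [NormedAddCommGroup β] {f : α → β}
    (hf : MemLp f (ENNReal.ofReal p) μ) (hp : 2 ≤ p) : MemLp f 2 μ :=
  hf.mono_exponent (by simpa using ENNReal.ofReal_le_ofReal hp)

lemma sq_sub_min_le_rpow {x B : ℝ} (hB : 0 < B) (hp : 2 ≤ p) :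
    x ^ 2 - min (x ^ 2) B ≤ |x| ^ p / B ^ (p / 2 - 1) := by
  rcases le_or_gt (x ^ 2) B with h | h
  · rw [min_eq_left h, sub_self]; positivity
  have hx : 0 < x ^ 2 := hB.trans h
  have hpow : |x| ^ p = (x ^ 2) ^ (p / 2 - 1) * x ^ 2 := by
    rw [← Real.rpow_add_one hx.ne', sub_add_cancel, ← sq_abs, ← Real.rpow_natCast,
      ← Real.rpow_mul (abs_nonneg x)]
    ring_nf
  have hBx : B ^ (p / 2 - 1) ≤ (x ^ 2) ^ (p / 2 - 1) :=
    Real.rpow_le_rpow hB.le h.le (by linarith)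
  rw [min_eq_right h.le, hpow, mul_div_right_comm]
  calc x ^ 2 - B ≤ x ^ 2 := by linarith
    _ ≤ (x ^ 2) ^ (p / 2 - 1) / B ^ (p / 2 - 1) * x ^ 2 :=
        le_mul_of_one_le_left hx.le ((one_le_div (by positivity)).2 hBx)

lemma integral_sq_sub_integral_min_le {f : α → ℝ} {B : ℝ} (hf : MemLp f (ENNReal.ofReal p) μ)
    (hp : 2 ≤ p) (hB : 0 < B) :
    ∫ a, f a ^ 2 ∂μ - ∫ a, min (f a ^ 2) B ∂μ ≤ (∫ a, |f a| ^ p ∂μ) / B ^ (p / 2 - 1) := by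
  have hsq : Integrable (fun a => f a ^ 2) μ := (hf.memLp_two hp).integrable_sq
  have hmin : Integrable (fun a => min (f a ^ 2) B) μ := hsq.inf (integrable_const B)
  have hpow : Integrable (fun a => |f a| ^ p) μ := by
    simpa using hf.integrable_norm_rpow_ofReal (by linarith)
  rw [← integral_sub hsq hmin, ← integral_div]
  exact integral_mono (hsq.sub hmin) (hpow.div_const _) fun a => sq_sub_min_le_rpow hB hp

variable {E : Type*} [NormedAddCommGroup E] [InnerProductSpace ℝ E]

lemma integral_abs_inner_rpow_le {X : α → E} (hX : MemLp X (ENNReal.ofReal p) μ) (hp : 0 ≤ p)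
    (w : E) : ∫ a, |⟪X a, w⟫| ^ p ∂μ ≤ ‖w‖ ^ p * ∫ a, ‖X a‖ ^ p ∂μ := by
  rw [← integral_const_mul]
  have hinner := (hX.inner_const (𝕜 := ℝ) w).integrable_norm_rpow_ofReal hp
  refine integral_mono (by simpa using hinner) ((hX.integrable_norm_rpow_ofReal hp).const_mul _)
    fun a => ?_
  rw [← Real.mul_rpow (norm_nonneg _) (norm_nonneg _), mul_comm]
  exact Real.rpow_le_rpow (abs_nonneg _) (abs_real_inner_le_norm _ _) hp

end Moments

lemma exists_pos_mul_norm_sq_le {E : Type*} [NormedAddCommGroup E] [NormedSpace ℝ E]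
    [FiniteDimensional ℝ E] {q : E → ℝ} (hq : Continuous q)
    (hsmul : ∀ (c : ℝ) (v : E), q (c • v) = c ^ 2 * q v) (hpos : ∀ v, v ≠ 0 → 0 < q v) :
    ∃ c > 0, ∀ v, c * ‖v‖ ^ 2 ≤ q v := by
  have hq0 : q 0 = 0 := by simpa using hsmul 0 0
  rcases subsingleton_or_nontrivial E with hE | hE
  · exact ⟨1, one_pos, fun v => by simp [Subsingleton.elim v 0, hq0]⟩
  obtain ⟨u, hu, hmin⟩ := (isCompact_sphere (0 : E) 1).exists_isMinOn
    (NormedSpace.sphere_nonempty.2 zero_le_one) hq.continuousOn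
  refine ⟨q u, hpos u (ne_zero_of_mem_unit_sphere ⟨u, hu⟩), fun v => ?_⟩
  rcases eq_or_ne v 0 with rfl | hv
  · simp [hq0]
  have hv' : 0 < ‖v‖ := norm_pos_iff.2 hv
  have h : q u ≤ q (‖v‖⁻¹ • v) := hmin (by simp [norm_smul, hv'.ne'])
  rw [hsmul, inv_pow, inv_mul_eq_div, le_div_iff₀ (by positivity)] at h
  exact h

section NullDirections

variable {α : Type*} [MeasurableSpace α] (μ : Measure α)
  {E : Type*} [NormedAddCommGroup E] [InnerProductSpace ℝ E]

def nullDirections (X : α → E) : Submodule ℝ E where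
  carrier := {v | ∀ᵐ a ∂μ, ⟪X a, v⟫ = 0}
  add_mem' {v w} hv hw := by
    change ∀ᵐ a ∂μ, ⟪X a, v + w⟫ = 0
    filter_upwards [hv, hw] with a h₁ h₂
    rw [inner_add_right, h₁, h₂, add_zero]
  zero_mem' := by simp
  smul_mem' c v hv := by
    change ∀ᵐ a ∂μ, ⟪X a, c • v⟫ = 0
    filter_upwards [hv] with a h
    rw [real_inner_smul_right, h, mul_zero]

variable {μ} {X : α → E}

lemma mem_nullDirections_of_integral_sq_eq_zero {v : E}
    (hint : Integrable (fun a => ⟪X a, v⟫ ^ 2) μ) (h : ∫ a, ⟪X a, v⟫ ^ 2 ∂μ = 0) :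
    v ∈ nullDirections μ X := by
  filter_upwards [(integral_eq_zero_iff_of_nonneg (fun a => sq_nonneg _) hint).1 h] with a ha
  exact pow_eq_zero_iff two_ne_zero |>.1 ha

lemma ae_inner_eq_inner_starProjection [FiniteDimensional ℝ E] (v : E) :
    ∀ᵐ a ∂μ, ⟪X a, v⟫ = ⟪X a, (nullDirections μ X)ᗮ.starProjection v⟫ := by
  have h := (nullDirections μ X)ᗮ.sub_starProjection_mem_orthogonal v
  rw [Submodule.orthogonal_orthogonal] at h
  filter_upwards [h] with a ha
  rwa [inner_sub_right, sub_eq_zero] at ha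

end NullDirections

section Covariance

lemma quadForm_eq_sum (A : Matrix (Fin d) (Fin d) ℝ) (v : EuclideanSpace ℝ (Fin d)) :
    quadForm A v = ∑ i, ∑ j, v i * v j * A i j := by
  simp only [quadForm, Matrix.inner_toEuclideanCLM, dotProduct, Matrix.mulVec, Finset.mul_sum]
  exact Finset.sum_congr rfl fun i _ => Finset.sum_congr rfl fun j _ => by ring

lemma quadForm_smul (A : Matrix (Fin d) (Fin d) ℝ) (c : ℝ) (v : EuclideanSpace ℝ (Fin d)) :
    quadForm A (c • v) = c ^ 2 * quadForm A v := by
  simp only [quadForm, map_smul, real_inner_smul_left, real_inner_smul_right]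
  ring

lemma continuous_quadForm (A : Matrix (Fin d) (Fin d) ℝ) : Continuous (quadForm A) :=
  continuous_id.inner (Matrix.toEuclideanCLM (𝕜 := ℝ) A).continuous

lemma quadForm_le_opNorm (A : Matrix (Fin d) (Fin d) ℝ) {v : EuclideanSpace ℝ (Fin d)}
    (hv : ‖v‖ = 1) : quadForm A v ≤ opNorm A :=
  calc quadForm A v ≤ ‖v‖ * ‖Matrix.toEuclideanCLM (𝕜 := ℝ) A v‖ := real_inner_le_norm _ _
    _ ≤ ‖v‖ * (opNorm A * ‖v‖) := by gcongr; exact (Matrix.toEuclideanCLM (𝕜 := ℝ) A).le_opNorm v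
    _ = opNorm A := by rw [hv, one_mul, mul_one]

variable {X₀ : Ω → EuclideanSpace ℝ (Fin d)} {Sig : Matrix (Fin d) (Fin d) ℝ}

lemma quadForm_eq_integral (hX : MemLp X₀ 2) (hcov : IsCovMatrix X₀ Sig)
    (v : EuclideanSpace ℝ (Fin d)) : quadForm Sig v = ∫ ω, ⟪X₀ ω, v⟫ ^ 2 := by
  have hcoord (i : Fin d) : MemLp (fun ω => X₀ ω i) 2 := by
    simpa [EuclideanSpace.inner_single_left] using
      hX.const_inner (𝕜 := ℝ) (EuclideanSpace.single i 1)
  have hprod (i j : Fin d) : Integrable fun ω => v i * v j * (X₀ ω i * X₀ ω j) :=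
    ((hcoord i).integrable_mul (hcoord j)).const_mul _
  have hexpand (ω : Ω) : ⟪X₀ ω, v⟫ ^ 2 = ∑ i, ∑ j, v i * v j * (X₀ ω i * X₀ ω j) := by
    simp only [PiLp.inner_apply, RCLike.inner_apply, conj_trivial, sq, Finset.sum_mul_sum]
    exact Finset.sum_congr rfl fun i _ => Finset.sum_congr rfl fun j _ => by ring
  simp_rw [hexpand, quadForm_eq_sum]
  rw [integral_finsetSum _ fun i _ => integrable_finsetSum _ fun j _ => hprod i j]
  refine Finset.sum_congr rfl fun i _ => ?_
  rw [integral_finsetSum _ fun j _ => hprod i j]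
  refine Finset.sum_congr rfl fun j _ => ?_
  rw [integral_const_mul, hcov]

lemma quadForm_nonneg (hX : MemLp X₀ 2) (hcov : IsCovMatrix X₀ Sig)
    (v : EuclideanSpace ℝ (Fin d)) : 0 ≤ quadForm Sig v :=
  quadForm_eq_integral hX hcov v ▸ integral_nonneg fun _ => sq_nonneg _

end Covariance

section Kappa

variable {X₀ : Ω → EuclideanSpace ℝ (Fin d)} {Sig : Matrix (Fin d) (Fin d) ℝ} {p : ℝ}

lemma kappa_nonneg : 0 ≤ kappa X₀ Sig p :=
  Real.sSup_nonneg <| by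
    rintro _ ⟨v, -, rfl⟩
    exact Real.rpow_nonneg (integral_nonneg fun ω => Real.rpow_nonneg (abs_nonneg _) _) _

lemma integral_abs_inner_smul_rpow (c : ℝ) (v : EuclideanSpace ℝ (Fin d)) :
    ∫ ω, |⟪X₀ ω, c • v⟫| ^ p = |c| ^ p * ∫ ω, |⟪X₀ ω, v⟫| ^ p := by
  rw [← integral_const_mul]
  simp_rw [real_inner_smul_right, abs_mul, Real.mul_rpow (abs_nonneg c) (abs_nonneg _)]

variable [IsProbabilityMeasure (ℙ : Measure Ω)]

/-- `kappa` is an `sSup` over the unbounded set `{u | ⟨u, Σu⟩ = 1}`, a junk value unless the set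
of moments is bounded. It is: `⟨X, u⟩` only sees the component of `u` orthogonal to the null
directions, and there the covariance form is coercive. -/
lemma bddAbove_kappa_set (hX : MemLp X₀ (ENNReal.ofReal p)) (hp : 2 ≤ p)
    (hcov : IsCovMatrix X₀ Sig) :
    BddAbove {r : ℝ | ∃ v : EuclideanSpace ℝ (Fin d), quadForm Sig v = 1 ∧
      r = (∫ ω, |⟪X₀ ω, v⟫| ^ p) ^ (1 / p)} := by
  set K := nullDirections ℙ X₀
  have hL2 : MemLp X₀ 2 := hX.memLp_two hp
  have hq := quadForm_eq_integral hL2 hcov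
  have hsq (v : EuclideanSpace ℝ (Fin d)) : Integrable fun ω => ⟪X₀ ω, v⟫ ^ 2 :=
    (hL2.inner_const (𝕜 := ℝ) v).integrable_sq
  have hpos (w : Kᗮ) (hw : w ≠ 0) : 0 < quadForm Sig w := by
    refine (quadForm_nonneg hL2 hcov w).lt_of_ne fun h => hw ?_
    have hK : (w : EuclideanSpace ℝ (Fin d)) ∈ K :=
      mem_nullDirections_of_integral_sq_eq_zero (hsq w) (hq w ▸ h.symm)
    exact Subtype.ext ((Submodule.orthogonal_disjoint K).le_bot ⟨hK, w.2⟩)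
  obtain ⟨c, hc, hcq⟩ := exists_pos_mul_norm_sq_le (E := Kᗮ)
    ((continuous_quadForm Sig).comp continuous_subtype_val)
    (fun c w => quadForm_smul Sig c w) hpos
  refine ⟨(c⁻¹ ^ (p / 2) * ∫ ω, ‖X₀ ω‖ ^ p) ^ (1 / p), ?_⟩
  rintro _ ⟨u, hu, rfl⟩
  set w := Kᗮ.starProjection u
  have hae := ae_inner_eq_inner_starProjection (μ := ℙ) (X := X₀) u
  have hw : quadForm Sig w = 1 := by
    rw [← hu, hq, hq]
    exact integral_congr_ae (by filter_upwards [hae] with ω h; rw [h])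
  have hw_norm : ‖w‖ ^ p ≤ c⁻¹ ^ (p / 2) := by
    have h : c * ‖w‖ ^ 2 ≤ quadForm Sig w := hcq ⟨w, Kᗮ.starProjection_apply_mem u⟩
    rw [hw, ← le_div_iff₀' hc, one_div] at h
    calc ‖w‖ ^ p = (‖w‖ ^ 2) ^ (p / 2) := by
          rw [← Real.rpow_natCast, ← Real.rpow_mul (norm_nonneg w)]; ring_nf
      _ ≤ c⁻¹ ^ (p / 2) := by gcongr
  refine Real.rpow_le_rpow (integral_nonneg fun ω => by positivity) ?_ (by positivity)
  calc ∫ ω, |⟪X₀ ω, u⟫| ^ p = ∫ ω, |⟪X₀ ω, w⟫| ^ p :=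
        integral_congr_ae (by filter_upwards [hae] with ω h; rw [h])
    _ ≤ ‖w‖ ^ p * ∫ ω, ‖X₀ ω‖ ^ p := integral_abs_inner_rpow_le hX (by linarith) w
    _ ≤ c⁻¹ ^ (p / 2) * ∫ ω, ‖X₀ ω‖ ^ p := by gcongr

lemma integral_abs_inner_rpow_le_kappa (hX : MemLp X₀ (ENNReal.ofReal p)) (hp : 2 ≤ p)
    (hcov : IsCovMatrix X₀ Sig) (v : EuclideanSpace ℝ (Fin d)) :
    ∫ ω, |⟪X₀ ω, v⟫| ^ p ≤ kappa X₀ Sig p ^ p * quadForm Sig v ^ (p / 2) := by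
  have hL2 : MemLp X₀ 2 := hX.memLp_two hp
  have hq := quadForm_eq_integral hL2 hcov
  rcases (quadForm_nonneg hL2 hcov v).eq_or_lt with hσ | hσ
  · have hv : v ∈ nullDirections ℙ X₀ :=
      mem_nullDirections_of_integral_sq_eq_zero ((hL2.inner_const (𝕜 := ℝ) v).integrable_sq)
        (hq v ▸ hσ.symm)
    have hzero : ∫ ω, |⟪X₀ ω, v⟫| ^ p = 0 := by
      rw [integral_eq_zero_of_ae]
      filter_upwards [hv] with ω h
      simp [h, Real.zero_rpow (by linarith : p ≠ 0)]
    rw [hzero, ← hσ, Real.zero_rpow (by linarith), mul_zero]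
  set s := Real.sqrt (quadForm Sig v)
  have hs : 0 < s := Real.sqrt_pos.2 hσ
  have hu : quadForm Sig (s⁻¹ • v) = 1 := by
    rw [quadForm_smul, inv_pow, Real.sq_sqrt hσ.le, inv_mul_cancel₀ hσ.ne']
  have hκ : ∫ ω, |⟪X₀ ω, s⁻¹ • v⟫| ^ p ≤ kappa X₀ Sig p ^ p := by
    have h : (∫ ω, |⟪X₀ ω, s⁻¹ • v⟫| ^ p) ^ (1 / p) ≤ kappa X₀ Sig p :=
      le_csSup (bddAbove_kappa_set hX hp hcov) ⟨_, hu, rfl⟩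
    rwa [one_div, Real.rpow_inv_le_iff_of_pos (integral_nonneg fun ω => by positivity)
      kappa_nonneg (by linarith)] at h
  calc ∫ ω, |⟪X₀ ω, v⟫| ^ p = s ^ p * ∫ ω, |⟪X₀ ω, s⁻¹ • v⟫| ^ p := by
        rw [integral_abs_inner_smul_rpow, abs_of_pos (inv_pos.2 hs), ← mul_assoc,
          ← Real.mul_rpow hs.le (inv_nonneg.2 hs.le), mul_inv_cancel₀ hs.ne', Real.one_rpow,
          one_mul]
    _ ≤ s ^ p * kappa X₀ Sig p ^ p := by gcongr
    _ = kappa X₀ Sig p ^ p * quadForm Sig v ^ (p / 2) := by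
        rw [mul_comm, show s = quadForm Sig v ^ (1 / 2 : ℝ) from Real.sqrt_eq_rpow _,
          ← Real.rpow_mul hσ.le]
        ring_nf

theorem abs_quadForm_sub_integral_min_le (hX : MemLp X₀ (ENNReal.ofReal p)) (hp : 2 ≤ p)
    (hcov : IsCovMatrix X₀ Sig) {B : ℝ} (hB : 0 < B) {v : EuclideanSpace ℝ (Fin d)}
    (hv : ‖v‖ = 1) :
    |quadForm Sig v - ∫ ω, min (⟪X₀ ω, v⟫ ^ 2) B| ≤
      kappa X₀ Sig p ^ p * opNorm Sig ^ (p / 2) / B ^ (p / 2 - 1) := by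
  have hL2 : MemLp X₀ 2 := hX.memLp_two hp
  have hsq := (hL2.inner_const (𝕜 := ℝ) v).integrable_sq
  have hle : ∫ ω, min (⟪X₀ ω, v⟫ ^ 2) B ≤ quadForm Sig v := by
    rw [quadForm_eq_integral hL2 hcov]
    exact integral_mono (hsq.inf (integrable_const B)) hsq fun ω => min_le_left _ _
  rw [abs_of_nonneg (sub_nonneg.2 hle), quadForm_eq_integral hL2 hcov]
  calc (∫ ω, ⟪X₀ ω, v⟫ ^ 2) - ∫ ω, min (⟪X₀ ω, v⟫ ^ 2) B
        ≤ (∫ ω, |⟪X₀ ω, v⟫| ^ p) / B ^ (p / 2 - 1) :=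
          integral_sq_sub_integral_min_le (hX.inner_const v) hp hB
    _ ≤ kappa X₀ Sig p ^ p * quadForm Sig v ^ (p / 2) / B ^ (p / 2 - 1) := by
          gcongr; exact integral_abs_inner_rpow_le_kappa hX hp hcov v
    _ ≤ kappa X₀ Sig p ^ p * opNorm Sig ^ (p / 2) / B ^ (p / 2 - 1) := by
          have := kappa_nonneg (X₀ := X₀) (Sig := Sig) (p := p)
          have := quadForm_nonneg hL2 hcov v
          gcongr; exact quadForm_le_opNorm Sig hv

end Kappa

lemma min_sq_mem_Icc {B : ℝ} (hB : 0 ≤ B) (x : ℝ) : min (x ^ 2) B ∈ Set.Icc 0 B :=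
  ⟨le_min (sq_nonneg x) hB, min_le_right _ _⟩

lemma integral_mem_Icc_of_mem_Icc {α : Type*} [MeasurableSpace α] {μ : Measure α}
    [IsProbabilityMeasure μ] {g : α → ℝ} {B : ℝ} (hg : ∀ a, g a ∈ Set.Icc 0 B) :
    ∫ a, g a ∂μ ∈ Set.Icc 0 B :=
  ⟨integral_nonneg fun a => (hg a).1, by
    simpa using integral_mono_of_nonneg (ae_of_all _ fun a => (hg a).1)
      (integrable_const (μ := μ) B) (ae_of_all _ fun a => (hg a).2)⟩

lemma abs_sum_sub_div_le {a : Fin n → ℝ} {b B : ℝ} (ha : ∀ i, a i ∈ Set.Icc 0 B)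
    (hb : b ∈ Set.Icc 0 B) : |∑ i, (a i - b)| / n ≤ B := by
  refine div_le_of_le_mul₀ (Nat.cast_nonneg n) (hb.1.trans hb.2) ?_
  calc |∑ i, (a i - b)| ≤ ∑ i, |a i - b| := Finset.abs_sum_le_sum_abs _ _
    _ ≤ (Finset.univ : Finset (Fin n)).card * B :=
        sum_le_card_mul _ fun i => abs_sub_le_of_nonneg_of_le (ha i).1 (ha i).2 hb.1 hb.2
    _ = B * n := by simp [mul_comm]

lemma nCount_eq_card_filter (P : Fin n → Prop) [DecidablePred P] :
    nCount P = (Finset.univ.filter P).card := by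
  unfold nCount
  congr

section Sample

variable {x y : Fin n → EuclideanSpace ℝ (Fin d)} {v : EuclideanSpace ℝ (Fin d)} {B : ℝ}

theorem abs_eHat_sub_mean_min_le {k : ℕ} (hkn : k < n) (hB : 0 ≤ B)
    (hk : nCount (fun i => y i ≠ x i) + nCount (fun i => B < ⟪x i, v⟫ ^ 2) ≤ k) :
    |eHat y k v - (∑ i, min (⟪x i, v⟫ ^ 2) B) / n| ≤ 2 * B * k / n := by
  classical
  set G := Finset.univ.filter fun i => y i = x i ∧ ⟪x i, v⟫ ^ 2 ≤ B
  have hG : Gᶜ.card ≤ k := by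
    have hsub : Gᶜ ⊆ Finset.univ.filter (fun i => y i ≠ x i) ∪
        Finset.univ.filter (fun i => B < ⟪x i, v⟫ ^ 2) := by
      intro i
      simp only [G, Finset.mem_compl, Finset.mem_filter, Finset.mem_union, Finset.mem_univ,
        true_and, not_and, not_le]
      tauto
    rw [nCount_eq_card_filter, nCount_eq_card_filter] at hk
    exact (Finset.card_le_card hsub).trans ((Finset.card_union_le _ _).trans hk)
  refine abs_trimmedMean_sub_mean_le hkn (fun i => sq_nonneg _) (fun i => (min_sq_mem_Icc hB _).1)
    (fun i => (min_sq_mem_Icc hB _).2) (fun i hi => ?_) hG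
  obtain ⟨hyx, hxB⟩ := (Finset.mem_filter.1 hi).2
  rw [hyx, min_eq_left hxB]

lemma abs_mean_min_sub_integral_le_sSup [IsProbabilityMeasure (ℙ : Measure Ω)]
    (X₀ : Ω → EuclideanSpace ℝ (Fin d)) (hn : 0 < n) (hB : 0 ≤ B) (hv : ‖v‖ = 1) :
    |(∑ i, min (⟪x i, v⟫ ^ 2) B) / n - ∫ ω, min (⟪X₀ ω, v⟫ ^ 2) B| ≤
      sSup {r : ℝ | ∃ v' : EuclideanSpace ℝ (Fin d), ‖v'‖ = 1 ∧
        r = |∑ i, (min (⟪x i, v'⟫ ^ 2) B - ∫ ω, min (⟪X₀ ω, v'⟫ ^ 2) B)| / n} := by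
  have hmean (m : ℝ) : (∑ i, min (⟪x i, v⟫ ^ 2) B) / n - m =
      (∑ i, (min (⟪x i, v⟫ ^ 2) B - m)) / n := by
    rw [Finset.sum_sub_distrib, Finset.sum_const, Finset.card_univ, Fintype.card_fin,
      nsmul_eq_mul, sub_div, mul_div_cancel_left₀ _ (by exact_mod_cast hn.ne')]
  rw [hmean, abs_div, Nat.abs_cast]
  refine le_csSup ⟨B, ?_⟩ ⟨v, hv, rfl⟩
  rintro _ ⟨u, -, rfl⟩
  exact abs_sum_sub_div_le (fun i => min_sq_mem_Icc hB _)
    (integral_mem_Icc_of_mem_Icc fun ω => min_sq_mem_Icc hB _)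

end Sample

theorem estimator_vs_truncated_process_general
    {Ω : Type} [MeasureSpace Ω] [IsProbabilityMeasure (ℙ : Measure Ω)]
    {d n : ℕ} (X₀ : Ω → EuclideanSpace ℝ (Fin d))
    (X Y : Fin n → Ω → EuclideanSpace ℝ (Fin d))
    (Sig : Matrix (Fin d) (Fin d) ℝ) (p η : ℝ) (B : ℝ) (t k : ℕ)
    (hX₀ : Measurable X₀) (hp : 4 ≤ p)
    (hmom : Integrable fun ω => ‖X₀ ω‖ ^ p)
    (hcov : IsCovMatrix X₀ Sig)
    (hcontam : ∀ ω, ((nCount fun i => Y i ω ≠ X i ω) : ℝ) ≤ η * n)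
    (hB : 0 < B) (hkt : ⌊η * n⌋₊ + t ≤ k) (hkn : k < n)
    (ω : Ω)
    (hcount : ∀ v : EuclideanSpace ℝ (Fin d), ‖v‖ = 1 →
      nCount (fun i => B < ⟪X i ω, v⟫ ^ 2) ≤ t) :
    ∀ v : EuclideanSpace ℝ (Fin d), ‖v‖ = 1 →
      |eHat (fun i => Y i ω) k v - quadForm Sig v| ≤
        sSup {x : ℝ | ∃ v' : EuclideanSpace ℝ (Fin d), ‖v'‖ = 1 ∧
            x = |∑ i, (min (⟪X i ω, v'⟫ ^ 2) B -
              ∫ ω', min (⟪X₀ ω', v'⟫ ^ 2) B)| / n}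
          + 2 * B * k / n
          + kappa X₀ Sig p ^ p * opNorm Sig ^ (p / 2) / B ^ (p / 2 - 1) := by
  intro v hv
  have hX : MemLp X₀ (ENNReal.ofReal p) := by
    refine (integrable_norm_rpow_iff hX₀.aestronglyMeasurable (by simp; linarith)
      ENNReal.ofReal_ne_top).1 ?_
    rwa [ENNReal.toReal_ofReal (by linarith)]
  have htrim := abs_eHat_sub_mean_min_le (x := fun i => X i ω) (y := fun i => Y i ω) (v := v)
    hkn hB.le (by have := Nat.le_floor (hcontam ω); have := hcount v hv; omega)
  have hemp := abs_mean_min_sub_integral_le_sSup (x := fun i => X i ω) X₀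
    ((Nat.zero_le k).trans_lt hkn) hB.le hv
  have htail := abs_quadForm_sub_integral_min_le hX (by linarith) hcov hB hv
  have h₁ := abs_sub_le (eHat (fun i => Y i ω) k v) ((∑ i, min (⟪X i ω, v⟫ ^ 2) B) / n)
    (quadForm Sig v)
  have h₂ := abs_sub_le ((∑ i, min (⟪X i ω, v⟫ ^ 2) B) / n) (∫ ω', min (⟪X₀ ω', v⟫ ^ 2) B)
    (quadForm Sig v)
  rw [abs_sub_comm] at htail
  linarith

/-- Under the counting condition, the trimmed estimators are controlled by the truncated
empirical process (Proposition 4.1). -/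
theorem estimator_vs_truncated_process
    {Ω : Type} [MeasureSpace Ω] [IsProbabilityMeasure (ℙ : Measure Ω)]
    {d n : ℕ} (X₀ : Ω → EuclideanSpace ℝ (Fin d))
    (X Y : Fin n → Ω → EuclideanSpace ℝ (Fin d))
    (Sig : Matrix (Fin d) (Fin d) ℝ) (p η : ℝ) (B : ℝ) (t k : ℕ)
    (hX₀ : Measurable X₀) (hiid : IsIIDSample X X₀) (hp : 4 ≤ p)
    (hmom : Integrable fun ω => ‖X₀ ω‖ ^ p)
    (hmean : (∫ ω, X₀ ω) = 0)
    (hcov : IsCovMatrix X₀ Sig) (hSig : Sig ≠ 0)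
    (hY : ∀ i, Measurable (Y i)) (hη0 : 0 ≤ η) (hη1 : η < 1)
    (hcontam : ∀ ω, ((nCount fun i => Y i ω ≠ X i ω) : ℝ) ≤ η * n)
    (hB : 0 < B) (hkt : ⌊η * n⌋₊ + t ≤ k) (hkn : k < n)
    (ω : Ω)
    (hcount : ∀ v : EuclideanSpace ℝ (Fin d), ‖v‖ = 1 →
      nCount (fun i => B < ⟪X i ω, v⟫ ^ 2) ≤ t) :
    ∀ v : EuclideanSpace ℝ (Fin d), ‖v‖ = 1 →
      |eHat (fun i => Y i ω) k v - quadForm Sig v| ≤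
        sSup {x : ℝ | ∃ v' : EuclideanSpace ℝ (Fin d), ‖v'‖ = 1 ∧
            x = |∑ i, (min (⟪X i ω, v'⟫ ^ 2) B -
              ∫ ω', min (⟪X₀ ω', v'⟫ ^ 2) B)| / n}
          + 2 * B * k / n
          + kappa X₀ Sig p ^ p * opNorm Sig ^ (p / 2) / B ^ (p / 2 - 1) :=
  estimator_vs_truncated_process_general X₀ X Y Sig p η B t k hX₀ hp hmom hcov hcontam hB hkt hkn ω
    hcount

end CovPaper
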